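/- arXiv:math/0507223 — 5 statements merged into one kernel-verified Lean document; each statement's English description precedes it below -/
import Mathlib

section
/- Let (X,η) be a field configuration of the Poisson sigma model on an open set U ⊆ ℝ² satisfying both equations of motion (E1) and (E2) on U, and let A : ℝⁿ → ℝⁿ be a smooth map (a vector field, components A^μ). Then at every point of U one has the identity ∂₁( Σ_μ A^μ(X) η_{μ2} ) − ∂₂( Σ_μ A^μ(X) η_{μ1} ) = Σ_{μ,ν,λ} ( α^{λν} ∂_λ A^μ − α^{λμ} ∂_λ A^ν − A^λ ∂_λ α^{μν} )(X) · η_{μ1} η_{ν2}. (This is the coordinate form, for a solution of the Poisson sigma model, of the statement that the contraction of the Schouten bracket [α, A] with η∧η is an exact 2-form; it is the k = 2 case of the Stokes-type lemma ⟨[α,A], (c,X̂)⟩ = ⟨A, ∂(c,X̂)⟩.) -/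
open MeasureTheory

noncomputable def pd (i : Fin 2) (g : ℝ × ℝ → ℝ) (p : ℝ × ℝ) : ℝ :=
  fderiv ℝ g p (if i = 0 then ((1 : ℝ), (0 : ℝ)) else ((0 : ℝ), (1 : ℝ)))

noncomputable def pdn {n : ℕ} (lam : Fin n) (g : (Fin n → ℝ) → ℝ) (x : Fin n → ℝ) : ℝ :=
  fderiv ℝ g x (Pi.single lam 1)

noncomputable def Lag {n : ℕ} (α : (Fin n → ℝ) → Fin n → Fin n → ℝ)
    (X : ℝ × ℝ → Fin n → ℝ) (η : ℝ × ℝ → Fin n → Fin 2 → ℝ) (p : ℝ × ℝ) : ℝ :=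
  (∑ μ, (η p μ 0 * pd 1 (fun q => X q μ) p - η p μ 1 * pd 0 (fun q => X q μ) p))
    + ∑ μ, ∑ ν, α (X p) μ ν * η p μ 0 * η p ν 1

/- Auxiliary calculus lemmas -/

lemma pd_sum {ι : Type*} (s : Finset ι) (i : Fin 2) (g : ι → ℝ × ℝ → ℝ) (p : ℝ × ℝ)
    (hg : ∀ μ ∈ s, DifferentiableAt ℝ (g μ) p) :
    pd i (fun q => ∑ μ ∈ s, g μ q) p = ∑ μ ∈ s, pd i (g μ) p := by
  unfold pd
  rw [fderiv_fun_sum hg]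
  simp

lemma pd_mul (i : Fin 2) (f g : ℝ × ℝ → ℝ) (p : ℝ × ℝ)
    (hf : DifferentiableAt ℝ f p) (hg : DifferentiableAt ℝ g p) :
    pd i (fun q => f q * g q) p = pd i f p * g p + f p * pd i g p := by
  unfold pd
  rw [fderiv_fun_mul hf hg]
  simp
  ring

lemma pd_comp {n : ℕ} (i : Fin 2) (F : (Fin n → ℝ) → ℝ) (X : ℝ × ℝ → Fin n → ℝ) (p : ℝ × ℝ)
    (hF : DifferentiableAt ℝ F (X p)) (hX : DifferentiableAt ℝ X p) :
    pd i (fun q => F (X q)) p = ∑ lam, pdn lam F (X p) * pd i (fun q => X q lam) p := by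
  have hcomp : fderiv ℝ (fun q => F (X q)) p = (fderiv ℝ F (X p)).comp (fderiv ℝ X p) :=
    fderiv_comp p hF hX
  unfold pd pdn
  set e := (if i = 0 then ((1 : ℝ), (0 : ℝ)) else ((0 : ℝ), (1 : ℝ))) with he
  have hv' : ∀ lam, fderiv ℝ (fun q => X q lam) p e = fderiv ℝ X p e lam := by
    intro lam
    have h2 : (fun q => X q lam)
        = (ContinuousLinearMap.proj lam : (Fin n → ℝ) →L[ℝ] ℝ) ∘ X := rfl
    rw [h2, fderiv_comp p (ContinuousLinearMap.proj lam).differentiableAt hX,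
      ContinuousLinearMap.fderiv]
    rfl
  have hsum : fderiv ℝ X p e = ∑ lam, fderiv ℝ X p e lam • (Pi.single lam 1 : Fin n → ℝ) := by
    ext j
    simp [Finset.sum_apply, Pi.single_apply]
  rw [hcomp]
  simp only [ContinuousLinearMap.comp_apply]
  rw [hsum, map_sum]
  refine Finset.sum_congr rfl fun lam _ => ?_
  rw [ContinuousLinearMap.map_smul, hv' lam]
  simp [mul_comm]

/- Auxiliary sum-reshuffling lemmas -/

lemma rot3 {n : ℕ} (f : Fin n → Fin n → Fin n → ℝ) :
    ∑ x, ∑ y, ∑ z, f x y z = ∑ y, ∑ z, ∑ x, f x y z :=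
  Finset.sum_comm.trans (Finset.sum_congr rfl fun _ _ => Finset.sum_comm)

lemma rot3' {n : ℕ} (f : Fin n → Fin n → Fin n → ℝ) :
    ∑ x, ∑ y, ∑ z, f x y z = ∑ z, ∑ x, ∑ y, f x y z :=
  (rot3 f).trans (rot3 (fun y z x => f x y z))

lemma alg {n : ℕ} (a d : Fin n → Fin n → ℝ)
    (c : Fin n → Fin n → Fin n → ℝ) (A' : Fin n → ℝ) (E : Fin n → Fin 2 → ℝ) :
    ∑ μ, ((∑ lam, d lam μ * (-∑ ν, a lam ν * E ν 0)) * E μ 1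
        - (∑ lam, d lam μ * (-∑ ν, a lam ν * E ν 1)) * E μ 0
        + A' μ * (-(∑ x, ∑ y, c μ x y * E x 0 * E y 1)))
    = ∑ μ, ∑ ν, (∑ lam, (a lam ν * d lam μ - a lam μ * d lam ν - A' lam * c lam μ ν))
        * E μ 0 * E ν 1 := by
  have hL : ∀ μ, ((∑ lam, d lam μ * (-∑ ν, a lam ν * E ν 0)) * E μ 1
        - (∑ lam, d lam μ * (-∑ ν, a lam ν * E ν 1)) * E μ 0
        + A' μ * (-(∑ x, ∑ y, c μ x y * E x 0 * E y 1)))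
      = ∑ lam, ∑ ν, (d lam μ * a lam ν * E ν 1 * E μ 0
          - d lam μ * a lam ν * E ν 0 * E μ 1
          - A' μ * c μ lam ν * E lam 0 * E ν 1) := by
    intro μ
    simp only [Finset.sum_sub_distrib, mul_neg, Finset.mul_sum, Finset.sum_mul,
      Finset.sum_neg_distrib, neg_mul]
    ring_nf
    simp only [mul_comm, mul_assoc, mul_left_comm]
    ring
  rw [Finset.sum_congr rfl fun μ _ => hL μ]
  have hR : ∀ μ ν, (∑ lam, (a lam ν * d lam μ - a lam μ * d lam ν - A' lam * c lam μ ν))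
        * E μ 0 * E ν 1
      = ∑ lam, (a lam ν * d lam μ * E μ 0 * E ν 1 - a lam μ * d lam ν * E μ 0 * E ν 1
          - A' lam * c lam μ ν * E μ 0 * E ν 1) := by
    intro μ ν
    rw [Finset.sum_mul, Finset.sum_mul]
    exact Finset.sum_congr rfl fun lam _ => by ring
  rw [Finset.sum_congr rfl fun μ _ => Finset.sum_congr rfl fun ν _ => hR μ ν]
  simp only [Finset.sum_sub_distrib]
  congr 1
  · congr 1
    · refine Finset.sum_congr rfl fun μ _ => Finset.sum_comm.trans ?_
      exact Finset.sum_congr rfl fun ν _ => Finset.sum_congr rfl fun lam _ => by ring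
    · rw [rot3' (f := fun μ lam ν => d lam μ * a lam ν * E ν 0 * E μ 1)]
      refine Finset.sum_congr rfl fun μ _ => Finset.sum_congr rfl fun ν _ =>
        Finset.sum_congr rfl fun lam _ => by ring
  · rw [rot3 (f := fun μ lam ν => A' μ * c μ lam ν * E lam 0 * E ν 1)]

/-- For a solution `(X,η)` of the Poisson sigma model on `U` and any smooth
vector field `A` on the target, at every point of `U` the exterior derivative of the
1-form `i_A η` equals the contraction of the Schouten bracket `[α,A]` with `η ∧ η`:
`∂₁(∑ A^μ(X) η_{μ2}) − ∂₂(∑ A^μ(X) η_{μ1})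
  = ∑ (α^{λν}∂_λA^μ − α^{λμ}∂_λA^ν − A^λ∂_λα^{μν})(X) η_{μ1} η_{ν2}`. -/
theorem stmt1 {n : ℕ} (hn : 1 ≤ n)
    (α : (Fin n → ℝ) → Fin n → Fin n → ℝ) (hα : ContDiff ℝ (⊤ : ℕ∞) α)
    (hskew : ∀ x μ ν, α x μ ν = - α x ν μ)
    (U : Set (ℝ × ℝ)) (hU : IsOpen U)
    (X : ℝ × ℝ → Fin n → ℝ) (η : ℝ × ℝ → Fin n → Fin 2 → ℝ)
    (hX : ContDiffOn ℝ (⊤ : ℕ∞) X U) (hη : ContDiffOn ℝ (⊤ : ℕ∞) η U)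
    (hE1 : ∀ p ∈ U, ∀ i : Fin 2, ∀ μ,
      pd i (fun q => X q μ) p + ∑ ν, α (X p) μ ν * η p ν i = 0)
    (hE2 : ∀ p ∈ U, ∀ ρ,
      pd 0 (fun q => η q ρ 1) p - pd 1 (fun q => η q ρ 0) p
        + ∑ μ, ∑ ν, pdn ρ (fun x => α x μ ν) (X p) * η p μ 0 * η p ν 1 = 0)
    (A : (Fin n → ℝ) → Fin n → ℝ) (hA : ContDiff ℝ (⊤ : ℕ∞) A)
    (p : ℝ × ℝ) (hp : p ∈ U) :
    pd 0 (fun q => ∑ μ, A (X q) μ * η q μ 1) p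
      - pd 1 (fun q => ∑ μ, A (X q) μ * η q μ 0) p
    = ∑ μ, ∑ ν, (∑ lam, (α (X p) lam ν * pdn lam (fun x => A x μ) (X p)
          - α (X p) lam μ * pdn lam (fun x => A x ν) (X p)
          - A (X p) lam * pdn lam (fun x => α x μ ν) (X p)))
        * η p μ 0 * η p ν 1 := by
  have hXd : DifferentiableAt ℝ X p :=
    (hX.contDiffAt (hU.mem_nhds hp)).differentiableAt (by simp)
  have hηd : DifferentiableAt ℝ η p :=
    (hη.contDiffAt (hU.mem_nhds hp)).differentiableAt (by simp)
  have hηc : ∀ μ (j : Fin 2), DifferentiableAt ℝ (fun q => η q μ j) p := fun μ j =>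
    differentiableAt_pi.mp (differentiableAt_pi.mp hηd μ) j
  have hAc : ∀ μ, DifferentiableAt ℝ (fun x => A x μ) (X p) := fun μ =>
    differentiableAt_pi.mp ((hA.differentiable (by simp)) (X p)) μ
  have hAX : ∀ μ, DifferentiableAt ℝ (fun q => A (X q) μ) p := fun μ =>
    (hAc μ).comp p hXd
  have hprod : ∀ (j : Fin 2) μ, DifferentiableAt ℝ (fun q => A (X q) μ * η q μ j) p :=
    fun j μ => (hAX μ).mul (hηc μ j)
  have hL : ∀ i j : Fin 2, pd i (fun q => ∑ μ, A (X q) μ * η q μ j) p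
      = ∑ μ, ((∑ lam, pdn lam (fun x => A x μ) (X p) * pd i (fun q => X q lam) p) * η p μ j
          + A (X p) μ * pd i (fun q => η q μ j) p) := by
    intro i j
    calc pd i (fun q => ∑ μ, A (X q) μ * η q μ j) p
        = ∑ μ, pd i (fun q => A (X q) μ * η q μ j) p :=
          pd_sum Finset.univ i (fun μ q => A (X q) μ * η q μ j) p (fun μ _ => hprod j μ)
      _ = _ := by
          refine Finset.sum_congr rfl fun μ _ => ?_
          rw [pd_mul i _ _ p (hAX μ) (hηc μ j),
            pd_comp i (fun x => A x μ) X p (hAc μ) hXd]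
  have e1 : ∀ (i : Fin 2) (lam : Fin n), pd i (fun q => X q lam) p
      = -∑ ν, α (X p) lam ν * η p ν i := fun i lam => by
    have h := hE1 p hp i lam; linarith
  have e2 : ∀ ρ, pd 0 (fun q => η q ρ 1) p - pd 1 (fun q => η q ρ 0) p
      = -(∑ x, ∑ y, pdn ρ (fun z => α z x y) (X p) * η p x 0 * η p y 1) := fun ρ => by
    have h := hE2 p hp ρ; linarith
  rw [hL 0 1, hL 1 0, ← Finset.sum_sub_distrib]
  have step : ∀ μ, ((∑ lam, pdn lam (fun x => A x μ) (X p) * pd 0 (fun q => X q lam) p)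
            * η p μ 1 + A (X p) μ * pd 0 (fun q => η q μ 1) p)
      - ((∑ lam, pdn lam (fun x => A x μ) (X p) * pd 1 (fun q => X q lam) p) * η p μ 0
          + A (X p) μ * pd 1 (fun q => η q μ 0) p)
      = ((∑ lam, pdn lam (fun x => A x μ) (X p) * (-∑ ν, α (X p) lam ν * η p ν 0)) * η p μ 1
        - (∑ lam, pdn lam (fun x => A x μ) (X p) * (-∑ ν, α (X p) lam ν * η p ν 1)) * η p μ 0
        + A (X p) μ * (-(∑ x, ∑ y, pdn μ (fun z => α z x y) (X p) * η p x 0 * η p y 1))) := by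
    intro μ
    have h2 := e2 μ
    simp only [e1]
    linear_combination A (X p) μ * h2
  rw [Finset.sum_congr rfl fun μ _ => step μ]
  exact alg (fun lam ν => α (X p) lam ν) (fun lam μ => pdn lam (fun x => A x μ) (X p))
    (fun ρ x y => pdn ρ (fun z => α z x y) (X p)) (fun μ => A (X p) μ) (fun μ j => η p μ j)
end

section
/- Let ω : ℝⁿ → Mat_{n×n}(ℝ) be a smooth matrix-valued map such that ω(x) is skew-symmetric and invertible for every x, and such that ω is closed: ∂_a ω_{bc} + ∂_b ω_{ca} + ∂_c ω_{ab} = 0 identically for all a,b,c (the coordinate form of a symplectic form). Let α(x) := ω(x)^{-1} (which is smooth and skew-symmetric). Then for EVERY smooth map X : U → ℝⁿ on an open set U ⊆ ℝ², the pair (X, η) with η_{μi} := − Σ_ν ω_{μν}(X) ∂_i X^ν satisfies both Poisson sigma model equations of motion (E1) and (E2) on U. (In the symplectic case every map X is the base map of a solution, with η determined by η = −ω(X) dX.) -/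
open MeasureTheory

lemma fderiv_sum_mul' {E : Type*} [NormedAddCommGroup E] [NormedSpace ℝ E]
    {ι : Type*} [Fintype ι] (f g : ι → E → ℝ) (x : E) (v : E)
    (hf : ∀ c, DifferentiableAt ℝ (f c) x) (hg : ∀ c, DifferentiableAt ℝ (g c) x) :
    fderiv ℝ (fun y => ∑ c, f c y * g c y) x v
      = ∑ c, (f c x * fderiv ℝ (g c) x v + g c x * fderiv ℝ (f c) x v) := by
  rw [fderiv_fun_sum (A := fun c y => f c y * g c y) (fun c _ => (hf c).mul (hg c))]
  rw [ContinuousLinearMap.sum_apply]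
  refine Finset.sum_congr rfl fun c _ => ?_
  rw [fderiv_fun_mul (hf c) (hg c)]
  simp [smul_eq_mul]

lemma contDiff_det' {E : Type*} [NormedAddCommGroup E] [NormedSpace ℝ E]
    {m : ℕ} (M : E → Matrix (Fin m) (Fin m) ℝ)
    (h : ∀ a b, ContDiff ℝ (⊤ : ℕ∞) fun x => M x a b) :
    ContDiff ℝ (⊤ : ℕ∞) fun x => (M x).det := by
  have heq : (fun x => (M x).det)
      = fun x => ∑ σ : Equiv.Perm (Fin m), ((Equiv.Perm.sign σ : ℤ) : ℝ) * ∏ i, M x (σ i) i := by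
    funext x
    rw [Matrix.det_apply]
    simp [Units.smul_def, zsmul_eq_mul]
  rw [heq]
  exact ContDiff.sum fun σ _ =>
    contDiff_const.mul (contDiff_prod fun i _ => h _ _)


lemma final_alg {n : ℕ} (w S : Fin n → ℝ) (D : Fin n → Fin 2 → ℝ) (P G : Fin n → Fin n → ℝ)
    (hPG : ∀ a b, G a b = P a b - P b a) :
    -∑ x, (w x * S x + D x 1 * ∑ a, P a x * D a 0)
      - -∑ x, (w x * S x + D x 0 * ∑ a, P a x * D a 1)
      + ∑ a, ∑ b, G a b * D a 0 * D b 1 = 0 := by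
  rw [neg_sub_neg, ← Finset.sum_sub_distrib]
  have h1 : ∀ x : Fin n,
      (w x * S x + D x 0 * ∑ a, P a x * D a 1) - (w x * S x + D x 1 * ∑ a, P a x * D a 0)
        = (∑ a, P a x * D a 1 * D x 0) - ∑ a, P a x * D a 0 * D x 1 := by
    intro x
    have e1 : D x 0 * ∑ a, P a x * D a 1 = ∑ a, P a x * D a 1 * D x 0 := by
      rw [Finset.mul_sum]; exact Finset.sum_congr rfl fun a _ => by ring
    have e2 : D x 1 * ∑ a, P a x * D a 0 = ∑ a, P a x * D a 0 * D x 1 := by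
      rw [Finset.mul_sum]; exact Finset.sum_congr rfl fun a _ => by ring
    rw [e1, e2]; ring
  simp only [h1]
  rw [Finset.sum_sub_distrib]
  have hC : ∑ a, ∑ b, G a b * D a 0 * D b 1
      = (∑ a, ∑ b, P a b * D a 0 * D b 1) - ∑ a, ∑ b, P b a * D a 0 * D b 1 := by
    rw [← Finset.sum_sub_distrib]
    refine Finset.sum_congr rfl fun a _ => ?_
    rw [← Finset.sum_sub_distrib]
    refine Finset.sum_congr rfl fun b _ => ?_
    rw [hPG a b]; ring
  rw [hC]
  have hT2 : (∑ x, ∑ a, P a x * D a 0 * D x 1) = ∑ a, ∑ b, P a b * D a 0 * D b 1 :=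
    Finset.sum_comm
  have hT1 : (∑ x, ∑ a, P a x * D a 1 * D x 0) = ∑ a, ∑ b, P b a * D a 0 * D b 1 :=
    Finset.sum_congr rfl fun a _ => Finset.sum_congr rfl fun b _ => by ring
  rw [hT1, hT2]; ring

/-- Symplectic case. If `ω` is a smooth, pointwise skew-symmetric and
invertible, closed 2-form on ℝⁿ and `α(x) = ω(x)⁻¹` (expressed by the two-sided inverse
hypotheses), then for every smooth map `X : U → ℝⁿ` the pair `(X, η)` with
`η_{μi} = −∑_ν ω_{μν}(X) ∂_i X^ν` satisfies both equations of motion (E1) and (E2). -/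
theorem stmt4 {n : ℕ} (hn : 1 ≤ n)
    (ω : (Fin n → ℝ) → Fin n → Fin n → ℝ) (hω : ContDiff ℝ (⊤ : ℕ∞) ω)
    (hωskew : ∀ x a b, ω x a b = - ω x b a)
    (hclosed : ∀ x a b c,
      pdn a (fun y => ω y b c) x + pdn b (fun y => ω y c a) x
        + pdn c (fun y => ω y a b) x = 0)
    (α : (Fin n → ℝ) → Fin n → Fin n → ℝ)
    (hαω : ∀ x μ ν, ∑ a, α x μ a * ω x a ν = if μ = ν then 1 else 0)
    (hωα : ∀ x μ ν, ∑ a, ω x μ a * α x a ν = if μ = ν then 1 else 0)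
    (U : Set (ℝ × ℝ)) (hU : IsOpen U)
    (X : ℝ × ℝ → Fin n → ℝ) (hX : ContDiffOn ℝ (⊤ : ℕ∞) X U)
    (η : ℝ × ℝ → Fin n → Fin 2 → ℝ)
    (hηdef : ∀ p μ (i : Fin 2),
      η p μ i = -∑ ν, ω (X p) μ ν * pd i (fun q => X q ν) p) :
    (∀ p ∈ U, ∀ i : Fin 2, ∀ μ,
      pd i (fun q => X q μ) p + ∑ ν, α (X p) μ ν * η p ν i = 0)
    ∧ (∀ p ∈ U, ∀ ρ,
      pd 0 (fun q => η q ρ 1) p - pd 1 (fun q => η q ρ 0) p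
        + ∑ μ, ∑ ν, pdn ρ (fun x => α x μ ν) (X p) * η p μ 0 * η p ν 1 = 0) := by
  classical
  -- ### smoothness of ω entries and of α
  have hωe : ∀ a b, ContDiff ℝ (⊤ : ℕ∞) fun x => ω x a b :=
    fun a b => (contDiff_pi.mp ((contDiff_pi.mp hω) a)) b
  set Wm : (Fin n → ℝ) → Matrix (Fin n) (Fin n) ℝ := fun x => Matrix.of (ω x) with hWm
  have hWA1 : ∀ x, Wm x * Matrix.of (α x) = 1 := by
    intro x; ext μ ν
    simp only [Matrix.mul_apply, Matrix.of_apply, Matrix.one_apply]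
    exact hωα x μ ν
  have hAW1 : ∀ x, Matrix.of (α x) * Wm x = 1 := by
    intro x; ext μ ν
    simp only [Matrix.mul_apply, Matrix.of_apply, Matrix.one_apply]
    exact hαω x μ ν
  have hdetne : ∀ x, (Wm x).det ≠ 0 :=
    fun x => (Matrix.isUnit_det_of_left_inverse (hAW1 x)).ne_zero
  have hαinv : ∀ x, Matrix.of (α x) = (Wm x)⁻¹ :=
    fun x => (Matrix.inv_eq_right_inv (hWA1 x)).symm
  have hαformula : ∀ x μ ν, α x μ ν = ((Wm x).det)⁻¹ * (Wm x).adjugate μ ν := by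
    intro x μ ν
    have h := congrFun (congrFun (hαinv x) μ) ν
    rw [Matrix.inv_def] at h
    simpa [Matrix.smul_apply, Ring.inverse_eq_inv', smul_eq_mul] using h
  have hdets : ContDiff ℝ (⊤ : ℕ∞) fun x => (Wm x).det :=
    contDiff_det' _ (fun a b => hωe a b)
  have hadjs : ∀ μ ν, ContDiff ℝ (⊤ : ℕ∞) fun x => (Wm x).adjugate μ ν := by
    intro μ ν
    have h : (fun x => (Wm x).adjugate μ ν)
        = fun x => ((Wm x).updateRow ν (Pi.single μ 1)).det := by
      funext x; rw [Matrix.adjugate_apply]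
    rw [h]
    apply contDiff_det'
    intro a b
    rcases eq_or_ne a ν with h' | h'
    · simp only [Matrix.updateRow_apply, if_pos h']
      exact contDiff_const
    · simp only [Matrix.updateRow_apply, if_neg h']
      exact hωe a b
  have hαe : ∀ μ ν, ContDiff ℝ (⊤ : ℕ∞) fun x => α x μ ν := by
    intro μ ν
    rw [show (fun x => α x μ ν) = fun x => ((Wm x).det)⁻¹ * (Wm x).adjugate μ ν from
      funext fun x => hαformula x μ ν]
    exact (hdets.inv hdetne).mul (hadjs μ ν)
  have hωd : ∀ (a b : Fin n) x, DifferentiableAt ℝ (fun y => ω y a b) x :=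
    fun a b x => ((hωe a b).differentiable (by simp)).differentiableAt
  have hαd : ∀ (a b : Fin n) x, DifferentiableAt ℝ (fun y => α y a b) x :=
    fun a b x => ((hαe a b).differentiable (by simp)).differentiableAt
  -- ### derivative of α in terms of derivative of ω
  have key : ∀ x (ρ μ d : Fin n),
      ∑ c, (α x μ c * pdn ρ (fun y => ω y c d) x + ω x c d * pdn ρ (fun y => α y μ c) x) = 0 := by
    intro x ρ μ d
    have h0 : pdn ρ (fun y => ∑ c, α y μ c * ω y c d) x = 0 := by
      rw [show (fun y => ∑ c, α y μ c * ω y c d) = fun _ => (if μ = d then (1:ℝ) else 0) from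
        funext fun y => hαω y μ d]
      simp [pdn]
    rw [pdn, fderiv_sum_mul' (fun c y => α y μ c) (fun c y => ω y c d) x _
      (fun c => hαd μ c x) (fun c => hωd c d x)] at h0
    simpa [pdn] using h0
  have hdα : ∀ x (ρ μ ν : Fin n), pdn ρ (fun y => α y μ ν) x
      = -∑ d, (∑ c, α x μ c * pdn ρ (fun y => ω y c d) x) * α x d ν := by
    intro x ρ μ ν
    have c1 : pdn ρ (fun y => α y μ ν) x
        = ∑ c, pdn ρ (fun y => α y μ c) x * (∑ d, ω x c d * α x d ν) := by
      have h' : ∀ c, (∑ d, ω x c d * α x d ν) = if c = ν then (1:ℝ) else 0 := fun c => hωα x c ν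
      simp only [h', mul_ite, mul_one, mul_zero]
      rw [Finset.sum_ite_eq' Finset.univ ν (fun c => pdn ρ (fun y => α y μ c) x)]
      simp
    rw [c1]
    have c2 : ∑ c, pdn ρ (fun y => α y μ c) x * (∑ d, ω x c d * α x d ν)
        = ∑ d, (∑ c, pdn ρ (fun y => α y μ c) x * ω x c d) * α x d ν := by
      simp only [Finset.mul_sum, Finset.sum_mul]
      rw [Finset.sum_comm]
      exact Finset.sum_congr rfl fun d _ => Finset.sum_congr rfl fun c _ => by ring
    rw [c2, ← Finset.sum_neg_distrib]
    refine Finset.sum_congr rfl fun d _ => ?_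
    have h := key x ρ μ d
    rw [Finset.sum_add_distrib] at h
    have h2 : ∑ c, pdn ρ (fun y => α y μ c) x * ω x c d
        = -∑ c, α x μ c * pdn ρ (fun y => ω y c d) x := by
      rw [show ∑ c, pdn ρ (fun y => α y μ c) x * ω x c d
        = ∑ c, ω x c d * pdn ρ (fun y => α y μ c) x from
        Finset.sum_congr rfl fun c _ => mul_comm _ _]
      linarith
    rw [h2]; ring
  have hskewd : ∀ x (c a b : Fin n),
      pdn c (fun y => ω y a b) x = -pdn c (fun y => ω y b a) x := by
    intro x c a b
    rw [show (fun y => ω y a b) = fun y => -(ω y b a) from funext fun y => hωskew y a b]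
    simp [pdn, fderiv_neg]
  -- ### basic 2d calculus toolkit
  set E : Fin 2 → ℝ × ℝ := fun i => if i = 0 then ((1:ℝ), (0:ℝ)) else ((0:ℝ), (1:ℝ)) with hE
  have pd_eq : ∀ (i : Fin 2) (g : ℝ × ℝ → ℝ) (q : ℝ × ℝ), pd i g q = fderiv ℝ g q (E i) :=
    fun i g q => rfl
  constructor
  · -- E1
    intro p hp i μ
    have h1 : ∑ ν, α (X p) μ ν * η p ν i = -pd i (fun q => X q μ) p := by
      calc ∑ ν, α (X p) μ ν * η p ν i
          = ∑ ν, α (X p) μ ν * (-∑ lam, ω (X p) ν lam * pd i (fun q => X q lam) p) := by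
            refine Finset.sum_congr rfl fun ν _ => ?_
            rw [hηdef p ν i]
        _ = -∑ lam, (∑ ν, α (X p) μ ν * ω (X p) ν lam) * pd i (fun q => X q lam) p := by
            simp only [mul_neg, Finset.mul_sum, Finset.sum_neg_distrib, Finset.sum_mul]
            congr 1
            rw [Finset.sum_comm]
            exact Finset.sum_congr rfl fun lam _ => Finset.sum_congr rfl fun ν _ => by ring
        _ = -pd i (fun q => X q μ) p := by
            simp only [hαω, ite_mul, one_mul, zero_mul]
            rw [Finset.sum_ite_eq Finset.univ μ (fun lam => pd i (fun q => X q lam) p)]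
            simp
    rw [h1]; ring
  · -- E2
    intro p hp ρ
    have hmem : U ∈ nhds p := hU.mem_nhds hp
    have hXat : ContDiffAt ℝ (⊤ : ℕ∞) X p := hX.contDiffAt hmem
    have hXν : ∀ ν, ContDiffAt ℝ (⊤ : ℕ∞) (fun q => X q ν) p := fun ν => contDiffAt_pi.mp hXat ν
    have hXd : DifferentiableAt ℝ X p := hXat.differentiableAt (by simp)
    have hproj : ∀ (c : Fin n),
        fderiv ℝ (fun q' => X q' c) p = (ContinuousLinearMap.proj c).comp (fderiv ℝ X p) := by
      intro c
      exact ((ContinuousLinearMap.proj c).hasFDerivAt.comp p hXd.hasFDerivAt).fderiv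
    have chain : ∀ (f : (Fin n → ℝ) → ℝ), ContDiff ℝ (⊤ : ℕ∞) f → ∀ (j : Fin 2),
        pd j (fun q => f (X q)) p = ∑ c, pdn c f (X p) * pd j (fun q => X q c) p := by
      intro f hf j
      have hfd : DifferentiableAt ℝ f (X p) :=
        (hf.differentiable (by simp)).differentiableAt
      have hcomp : fderiv ℝ (fun q => f (X q)) p = (fderiv ℝ f (X p)).comp (fderiv ℝ X p) :=
        fderiv_comp p hfd hXd
      rw [pd_eq, hcomp]
      have hv : ∀ c, (fderiv ℝ X p (E j)) c = pd j (fun q => X q c) p := by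
        intro c
        rw [pd_eq, hproj c]
        rfl
      have hvdecomp : fderiv ℝ X p (E j)
          = ∑ c, (fderiv ℝ X p (E j)) c • (Pi.single c 1 : Fin n → ℝ) := by
        funext d
        simp [Pi.single_apply, Finset.sum_apply]
      rw [ContinuousLinearMap.comp_apply, hvdecomp, map_sum]
      refine Finset.sum_congr rfl fun c _ => ?_
      rw [_root_.map_smul, hv c]
      simp [pdn, smul_eq_mul, mul_comm]
    have hDν : ∀ (ν : Fin n) (i : Fin 2),
        ContDiffOn ℝ (⊤ : ℕ∞) (fun q => pd i (fun q' => X q' ν) q) U := by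
      intro ν i
      have h1 : ContDiffOn ℝ (⊤ : ℕ∞) (fun q => X q ν) U :=
        fun q hq => contDiffWithinAt_pi.mp (hX q hq) ν
      have h2 : ContDiffOn ℝ (⊤ : ℕ∞) (fderiv ℝ (fun q' => X q' ν)) U :=
        ((contDiffOn_infty_iff_fderiv_of_isOpen hU).mp h1).2
      exact h2.clm_apply contDiffOn_const
    have hsym : ∀ ν : Fin n,
        pd 0 (fun q => pd 1 (fun q' => X q' ν) q) p
          = pd 1 (fun q => pd 0 (fun q' => X q' ν) q) p := by
      intro ν
      have hdf : DifferentiableAt ℝ (fderiv ℝ (fun q' => X q' ν)) p := by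
        have h1 := (hXν ν).fderiv_right (m := (⊤:ℕ∞)) (by exact_mod_cast le_refl (⊤:ℕ∞))
        exact h1.differentiableAt (by simp)
      have expr : ∀ (i j : Fin 2), pd i (fun q => pd j (fun q' => X q' ν) q) p
          = fderiv ℝ (fderiv ℝ (fun q' => X q' ν)) p (E i) (E j) := by
        intro i j
        rw [pd_eq]
        have h3 : (fun q => pd j (fun q' => X q' ν) q)
            = fun q => (fderiv ℝ (fun q' => X q' ν) q) (E j) := rfl
        rw [h3, fderiv_clm_apply hdf (differentiableAt_const (E j))]
        simp
      rw [expr 0 1, expr 1 0]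
      have hsnd : IsSymmSndFDerivAt ℝ (fun q' => X q' ν) p := by
        apply ContDiffAt.isSymmSndFDerivAt (hXν ν)
        have h2 : ((2:ℕ∞) : WithTop ℕ∞) ≤ ((⊤:ℕ∞) : WithTop ℕ∞) := by
          exact_mod_cast (le_top : (2:ℕ∞) ≤ ⊤)
        simpa using h2
      exact hsnd _ _
    have hgd : ∀ a b : Fin n, DifferentiableAt ℝ (fun q => ω (X q) a b) p := by
      intro a b
      have h1 : ContDiffAt ℝ (⊤:ℕ∞) (fun q => ω (X q) a b) p :=
        ((hωe a b).contDiffAt).comp p hXat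
      exact h1.differentiableAt (by simp)
    have hDd : ∀ (ν : Fin n) (i : Fin 2),
        DifferentiableAt ℝ (fun q => pd i (fun q' => X q' ν) q) p :=
      fun ν i => ((hDν ν i).contDiffAt hmem).differentiableAt (by simp)
    -- product rule for pd of η
    have hpdη : ∀ (j i : Fin 2), pd j (fun q => η q ρ i) p
        = -∑ ν, (ω (X p) ρ ν * pd j (fun q => pd i (fun q' => X q' ν) q) p
            + pd i (fun q' => X q' ν) p * pd j (fun q => ω (X q) ρ ν) p) := by
      intro j i
      have hη : (fun q => η q ρ i)
          = fun q => -∑ ν, ω (X q) ρ ν * pd i (fun q' => X q' ν) q :=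
        funext fun q => hηdef q ρ i
      rw [pd_eq, hη, fderiv_fun_neg]
      rw [ContinuousLinearMap.neg_apply]
      rw [fderiv_sum_mul' (fun ν q => ω (X q) ρ ν) (fun ν q => pd i (fun q' => X q' ν) q) p (E j)
        (fun ν => hgd ρ ν) (fun ν => hDd ν i)]
      rfl
    have hchainω : ∀ (b : Fin n) (j : Fin 2), pd j (fun q => ω (X q) ρ b) p
        = ∑ a, pdn a (fun y => ω y ρ b) (X p) * pd j (fun q' => X q' a) p :=
      fun b j => chain (fun y => ω y ρ b) (hωe ρ b) j
    have hPG : ∀ a b : Fin n,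
        pdn ρ (fun y => ω y a b) (X p)
          = pdn a (fun y => ω y ρ b) (X p) - pdn b (fun y => ω y ρ a) (X p) := by
      intro a b
      have h := hclosed (X p) a ρ b
      have h1 := hskewd (X p) ρ b a
      have h2 := hskewd (X p) b a ρ
      linarith
    -- the third term
    have step1 : ∀ μ, ∑ ν, pdn ρ (fun y => α y μ ν) (X p) * η p ν 1
        = ∑ b, (∑ c, α (X p) μ c * pdn ρ (fun y => ω y c b) (X p))
            * pd 1 (fun q' => X q' b) p := by
      intro μ
      calc ∑ ν, pdn ρ (fun y => α y μ ν) (X p) * η p ν 1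
          = ∑ ν, ∑ d, ∑ b, (∑ c, α (X p) μ c * pdn ρ (fun y => ω y c d) (X p))
              * (α (X p) d ν * (ω (X p) ν b * pd 1 (fun q' => X q' b) p)) := by
            refine Finset.sum_congr rfl fun ν _ => ?_
            rw [hdα (X p) ρ μ ν, hηdef p ν 1, neg_mul_neg, Finset.sum_mul]
            refine Finset.sum_congr rfl fun d _ => ?_
            rw [mul_comm, Finset.sum_mul]
            refine Finset.sum_congr rfl fun b _ => by ring
        _ = ∑ d, ∑ b, (∑ c, α (X p) μ c * pdn ρ (fun y => ω y c d) (X p))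
              * ((∑ ν, α (X p) d ν * ω (X p) ν b) * pd 1 (fun q' => X q' b) p) := by
            rw [Finset.sum_comm]
            refine Finset.sum_congr rfl fun d _ => ?_
            rw [Finset.sum_comm]
            refine Finset.sum_congr rfl fun b _ => ?_
            rw [← Finset.mul_sum]
            congr 1
            rw [Finset.sum_mul]
            exact Finset.sum_congr rfl fun ν _ => by ring
        _ = ∑ b, (∑ c, α (X p) μ c * pdn ρ (fun y => ω y c b) (X p))
              * pd 1 (fun q' => X q' b) p := by
            simp only [hαω, ite_mul, one_mul, zero_mul, mul_ite, mul_zero]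
            refine Eq.trans (Finset.sum_congr rfl fun d _ => ?_) rfl
            rw [Finset.sum_ite_eq Finset.univ d
              (fun b => (∑ c, α (X p) μ c * pdn ρ (fun y => ω y c d) (X p))
                * pd 1 (fun q' => X q' b) p)]
            simp
    have step2 : ∀ c, ∑ μ, η p μ 0 * α (X p) μ c = pd 0 (fun q' => X q' c) p := by
      intro c
      calc ∑ μ, η p μ 0 * α (X p) μ c
          = ∑ μ, ∑ a, ω (X p) a μ * α (X p) μ c * pd 0 (fun q' => X q' a) p := by
            refine Finset.sum_congr rfl fun μ _ => ?_
            rw [hηdef p μ 0, neg_mul, Finset.sum_mul, ← Finset.sum_neg_distrib]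
            refine Finset.sum_congr rfl fun a _ => ?_
            rw [show ω (X p) μ a = -ω (X p) a μ from hωskew (X p) μ a]
            ring
        _ = ∑ a, (∑ μ, ω (X p) a μ * α (X p) μ c) * pd 0 (fun q' => X q' a) p := by
            rw [Finset.sum_comm]
            exact Finset.sum_congr rfl fun a _ => by rw [Finset.sum_mul]
        _ = pd 0 (fun q' => X q' c) p := by
            simp only [hωα, ite_mul, one_mul, zero_mul]
            rw [Finset.sum_ite_eq' Finset.univ c (fun a => pd 0 (fun q' => X q' a) p)]
            simp
    have hT : ∑ μ, ∑ ν, pdn ρ (fun y => α y μ ν) (X p) * η p μ 0 * η p ν 1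
        = ∑ a, ∑ b, pdn ρ (fun y => ω y a b) (X p)
            * pd 0 (fun q' => X q' a) p * pd 1 (fun q' => X q' b) p := by
      calc ∑ μ, ∑ ν, pdn ρ (fun y => α y μ ν) (X p) * η p μ 0 * η p ν 1
          = ∑ μ, η p μ 0 * ∑ ν, pdn ρ (fun y => α y μ ν) (X p) * η p ν 1 := by
            refine Finset.sum_congr rfl fun μ _ => ?_
            rw [Finset.mul_sum]
            exact Finset.sum_congr rfl fun ν _ => by ring
        _ = ∑ μ, ∑ b, ∑ c, η p μ 0 * α (X p) μ c * pdn ρ (fun y => ω y c b) (X p)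
              * pd 1 (fun q' => X q' b) p := by
            refine Finset.sum_congr rfl fun μ _ => ?_
            rw [step1 μ, Finset.mul_sum]
            refine Finset.sum_congr rfl fun b _ => ?_
            rw [mul_comm, Finset.sum_mul, Finset.sum_mul]
            exact Finset.sum_congr rfl fun c _ => by ring
        _ = ∑ b, ∑ c, (∑ μ, η p μ 0 * α (X p) μ c) * pdn ρ (fun y => ω y c b) (X p)
              * pd 1 (fun q' => X q' b) p := by
            rw [Finset.sum_comm]
            refine Finset.sum_congr rfl fun b _ => ?_
            rw [Finset.sum_comm]
            refine Finset.sum_congr rfl fun c _ => ?_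
            rw [Finset.sum_mul, Finset.sum_mul]
        _ = ∑ b, ∑ c, pdn ρ (fun y => ω y c b) (X p)
              * pd 0 (fun q' => X q' c) p * pd 1 (fun q' => X q' b) p := by
            refine Finset.sum_congr rfl fun b _ => Finset.sum_congr rfl fun c _ => ?_
            rw [step2 c]; ring
        _ = ∑ a, ∑ b, pdn ρ (fun y => ω y a b) (X p)
              * pd 0 (fun q' => X q' a) p * pd 1 (fun q' => X q' b) p := by
            rw [Finset.sum_comm]
    -- final assembly
    rw [hpdη 0 1, hpdη 1 0, hT]
    simp only [hchainω, hsym]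
    exact final_alg (fun x => ω (X p) ρ x)
      (fun x => pd 1 (fun q => pd 0 (fun q' => X q' x) q) p)
      (fun ν i => pd i (fun q' => X q' ν) p)
      (fun a b => pdn a (fun y => ω y ρ b) (X p))
      (fun a b => pdn ρ (fun y => ω y a b) (X p))
      hPG
end

section
/- Let ω : ℝⁿ → Mat_{n×n}(ℝ) be smooth with ω(x) skew-symmetric and invertible for every x, and closed: ∂_a ω_{bc} + ∂_b ω_{ca} + ∂_c ω_{ab} = 0 for all a,b,c. Let α(x) := ω(x)^{-1}. For a smooth map X : U → ℝⁿ on open U ⊆ ℝ², set η_{μi} := − Σ_ν ω_{μν}(X) ∂_i X^ν. Then at every point of U the Lagrangian density of (X,η) equals the coefficient of the pullback of ω by X: L(X,η) = Σ_{a,b} ω_{ab}(X) ∂₁X^a ∂₂X^b. (On the symplectic solution determined by X, the Poisson sigma model action density is the pullback X*(ω) of the symplectic form.) -/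
open MeasureTheory

/-- Symplectic case. With `ω` smooth, pointwise skew-symmetric, invertible
and closed, `α = ω⁻¹`, and `η_{μi} = −∑_ν ω_{μν}(X) ∂_i X^ν`, the Lagrangian density of
`(X,η)` equals the coefficient of the pullback `X*(ω)`:
`L(X,η) = ∑_{a,b} ω_{ab}(X) ∂₁X^a ∂₂X^b` at every point of `U`. -/
theorem stmt5 {n : ℕ} (hn : 1 ≤ n)
    (ω : (Fin n → ℝ) → Fin n → Fin n → ℝ) (hω : ContDiff ℝ (⊤ : ℕ∞) ω)
    (hωskew : ∀ x a b, ω x a b = - ω x b a)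
    (hclosed : ∀ x a b c,
      pdn a (fun y => ω y b c) x + pdn b (fun y => ω y c a) x
        + pdn c (fun y => ω y a b) x = 0)
    (α : (Fin n → ℝ) → Fin n → Fin n → ℝ)
    (hαω : ∀ x μ ν, ∑ a, α x μ a * ω x a ν = if μ = ν then 1 else 0)
    (hωα : ∀ x μ ν, ∑ a, ω x μ a * α x a ν = if μ = ν then 1 else 0)
    (U : Set (ℝ × ℝ)) (hU : IsOpen U)
    (X : ℝ × ℝ → Fin n → ℝ) (hX : ContDiffOn ℝ (⊤ : ℕ∞) X U)
    (η : ℝ × ℝ → Fin n → Fin 2 → ℝ)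
    (hηdef : ∀ p μ (i : Fin 2),
      η p μ i = -∑ ν, ω (X p) μ ν * pd i (fun q => X q ν) p)
    (p : ℝ × ℝ) (hp : p ∈ U) :
    Lag α X η p
      = ∑ a, ∑ b, ω (X p) a b * pd 0 (fun q => X q a) p * pd 1 (fun q => X q b) p := by
  
  classical
  set u : Fin n → ℝ := fun μ => pd 0 (fun q => X q μ) p with hu
  set v : Fin n → ℝ := fun μ => pd 1 (fun q => X q μ) p with hv
  set W : Fin n → Fin n → ℝ := fun a b => ω (X p) a b with hW
  have hskew : ∀ a b, W a b = - W b a := fun a b => hωskew (X p) a b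
  have key : ∀ a ν, ∑ μ, α (X p) μ ν * W μ a = - (if a = ν then (1:ℝ) else 0) := by
    intro a ν
    have : ∑ μ, α (X p) μ ν * W μ a = - ∑ μ, W a μ * α (X p) μ ν := by
      rw [← Finset.sum_neg_distrib]
      refine Finset.sum_congr rfl fun μ _ => ?_
      rw [hskew μ a]; ring
    rw [this, hωα (X p) a ν]
  have hη0 : ∀ μ, η p μ 0 = -∑ ν, W μ ν * u ν := fun μ => hηdef p μ 0
  have hη1 : ∀ μ, η p μ 1 = -∑ ν, W μ ν * v ν := fun μ => hηdef p μ 1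
  have hinner : ∀ ν, ∑ μ, α (X p) μ ν * η p μ 0 = u ν := by
    intro ν
    calc ∑ μ, α (X p) μ ν * η p μ 0
        = ∑ μ, ∑ a, α (X p) μ ν * W μ a * (- u a) := by
          refine Finset.sum_congr rfl fun μ _ => ?_
          rw [hη0 μ, mul_neg, Finset.mul_sum, ← Finset.sum_neg_distrib]
          refine Finset.sum_congr rfl fun a _ => by ring
      _ = ∑ a, (∑ μ, α (X p) μ ν * W μ a) * (- u a) := by
          rw [Finset.sum_comm]
          exact Finset.sum_congr rfl fun a _ => (Finset.sum_mul _ _ _).symm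
      _ = ∑ a, (if a = ν then (1:ℝ) else 0) * u a := by
          refine Finset.sum_congr rfl fun a _ => ?_
          rw [key a ν]; ring
      _ = u ν := by simp [ite_mul]
  have hB : ∑ μ, ∑ ν, α (X p) μ ν * η p μ 0 * η p ν 1
      = - ∑ a, ∑ b, W a b * u a * v b := by
    calc ∑ μ, ∑ ν, α (X p) μ ν * η p μ 0 * η p ν 1
        = ∑ ν, (∑ μ, α (X p) μ ν * η p μ 0) * η p ν 1 := by
          rw [Finset.sum_comm]
          exact Finset.sum_congr rfl fun ν _ => (Finset.sum_mul _ _ _).symm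
      _ = ∑ ν, u ν * η p ν 1 := by
          exact Finset.sum_congr rfl fun ν _ => by rw [hinner ν]
      _ = - ∑ a, ∑ b, W a b * u a * v b := by
          rw [← Finset.sum_neg_distrib]
          refine Finset.sum_congr rfl fun a _ => ?_
          rw [hη1 a, mul_neg, Finset.mul_sum, neg_inj]
          refine Finset.sum_congr rfl fun b _ => ?_
          ring
  have hT1 : ∑ μ, η p μ 0 * v μ = ∑ a, ∑ b, W a b * u a * v b := by
    calc ∑ μ, η p μ 0 * v μ
        = ∑ μ, ∑ ν, W ν μ * u ν * v μ := by
          refine Finset.sum_congr rfl fun μ _ => ?_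
          rw [hη0 μ, neg_mul, Finset.sum_mul, ← Finset.sum_neg_distrib]
          refine Finset.sum_congr rfl fun ν _ => ?_
          rw [hskew μ ν]; ring
      _ = ∑ a, ∑ b, W a b * u a * v b := Finset.sum_comm
  have hT2 : ∑ μ, η p μ 1 * u μ = - ∑ a, ∑ b, W a b * u a * v b := by
    calc ∑ μ, η p μ 1 * u μ
        = ∑ a, ∑ b, - (W a b * u a * v b) := by
          refine Finset.sum_congr rfl fun μ _ => ?_
          rw [hη1 μ, neg_mul, Finset.sum_mul, ← Finset.sum_neg_distrib]
          refine Finset.sum_congr rfl fun ν _ => by ring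
      _ = - ∑ a, ∑ b, W a b * u a * v b := by
          simp [Finset.sum_neg_distrib]
  unfold Lag
  have hsplit : ∑ μ, (η p μ 0 * pd 1 (fun q => X q μ) p - η p μ 1 * pd 0 (fun q => X q μ) p)
      = (∑ μ, η p μ 0 * v μ) - ∑ μ, η p μ 1 * u μ := by
    rw [Finset.sum_sub_distrib]
  rw [hsplit, hT1, hT2, hB]
  ring
end

section
/- Let θ : ℝⁿ → ℝⁿ be a smooth map (the components θ_μ of a 1-form on ℝⁿ) and define the exact 2-form ω_{ab} := ∂_a θ_b − ∂_b θ_a. If X₀, X₁ : ℝ² → ℝⁿ are smooth maps that agree on the boundary of the unit square Q = [0,1]² (X₀(u) = X₁(u) for all u ∈ ∂Q), then ∫_Q Σ_{a,b} ω_{ab}(X₀(u)) ∂₁X₀^a(u) ∂₂X₀^b(u) du = ∫_Q Σ_{a,b} ω_{ab}(X₁(u)) ∂₁X₁^a(u) ∂₂X₁^b(u) du. (The action ∫ X*(ω) of an exact 2-form depends only on the boundary values of X; this underlies the reduction of the Poisson sigma model path integral to a boundary path integral and the Dirac-type quantization argument.) -/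
open MeasureTheory

/-! ### Auxiliary lemmas -/

lemma stmt8_diff_top {E F : Type*} [NormedAddCommGroup E] [NormedSpace ℝ E]
    [NormedAddCommGroup F] [NormedSpace ℝ F] {f : E → F} (hX : ContDiff ℝ (⊤ : ℕ∞) f) :
    Differentiable ℝ f :=
  hX.differentiable (by simp)

lemma stmt8_pd_zero (g : ℝ × ℝ → ℝ) (p : ℝ × ℝ) : pd 0 g p = fderiv ℝ g p ((1:ℝ), (0:ℝ)) := by
  simp [pd]

lemma stmt8_pd_one (g : ℝ × ℝ → ℝ) (p : ℝ × ℝ) : pd 1 g p = fderiv ℝ g p ((0:ℝ), (1:ℝ)) := by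
  simp [pd]

lemma stmt8_clm_expand {n : ℕ} (L : (Fin n → ℝ) →L[ℝ] ℝ) (w : Fin n → ℝ) :
    L w = ∑ a, w a * L (Pi.single a 1) := by
  conv_lhs => rw [← Finset.univ_sum_single w]
  rw [map_sum]
  congr 1; ext a
  have h : Pi.single a (w a) = (w a) • (Pi.single a 1 : Fin n → ℝ) := by
    ext j; by_cases hj : j = a <;> simp [hj, Pi.single_apply]
  rw [h, L.map_smul, smul_eq_mul]

lemma stmt8_contDiff_comp_proj {E : Type*} [NormedAddCommGroup E] [NormedSpace ℝ E] {n : ℕ}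
    (X : E → Fin n → ℝ) (hX : ContDiff ℝ (⊤ : ℕ∞) X) (a : Fin n) :
    ContDiff ℝ (⊤ : ℕ∞) (fun q => X q a) :=
  (ContinuousLinearMap.proj (R := ℝ) (φ := fun _ : Fin n => ℝ) a).contDiff.comp hX

lemma stmt8_fderiv_comp_proj {E : Type*} [NormedAddCommGroup E] [NormedSpace ℝ E] {n : ℕ}
    (X : E → Fin n → ℝ) (hX : ContDiff ℝ (⊤ : ℕ∞) X) (a : Fin n) (u : E) (e : E) :
    fderiv ℝ (fun q => X q a) u e = fderiv ℝ X u e a := by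
  have h := ((ContinuousLinearMap.proj (R := ℝ) (φ := fun _ : Fin n => ℝ) a).hasFDerivAt.comp u
    (stmt8_diff_top hX u).hasFDerivAt).fderiv
  rw [show (fun q => X q a)
      = (ContinuousLinearMap.proj (R := ℝ) (φ := fun _ : Fin n => ℝ) a) ∘ X from rfl, h]
  rfl

lemma stmt8_key_deriv {n : ℕ} (θ : (Fin n → ℝ) → Fin n → ℝ) (hθ : ContDiff ℝ (⊤ : ℕ∞) θ)
    (X : ℝ × ℝ → Fin n → ℝ) (hX : ContDiff ℝ (⊤ : ℕ∞) X) (u : ℝ × ℝ) (e e' : ℝ × ℝ) :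
    fderiv ℝ (fun w => ∑ b, θ (X w) b * fderiv ℝ (fun q => X q b) w e') u e
      = ∑ b, (θ (X u) b * fderiv ℝ (fun w => fderiv ℝ (fun q => X q b) w) u e e'
        + fderiv ℝ (fun q => X q b) u e' * fderiv ℝ (fun y => θ y b) (X u) (fderiv ℝ X u e)) := by
  have h1 : ∀ b : Fin n, HasFDerivAt (fun w => θ (X w) b)
      ((fderiv ℝ (fun y => θ y b) (X u)).comp (fderiv ℝ X u)) u :=
    fun b => (stmt8_diff_top (stmt8_contDiff_comp_proj θ hθ b) (X u)).hasFDerivAt.comp u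
      (stmt8_diff_top hX u).hasFDerivAt
  have h2 : ∀ b : Fin n, HasFDerivAt (fun w => fderiv ℝ (fun q => X q b) w e')
      ((fderiv ℝ (fun w => fderiv ℝ (fun q => X q b) w) u).flip e') u := by
    intro b
    have hD : HasFDerivAt (fun w => fderiv ℝ (fun q => X q b) w)
        (fderiv ℝ (fun w => fderiv ℝ (fun q => X q b) w) u) u :=
      (stmt8_diff_top (((stmt8_contDiff_comp_proj X hX b).fderiv_right
        (by exact_mod_cast le_top))) u).hasFDerivAt
    have := hD.clm_apply (hasFDerivAt_const e' u)
    simpa using this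
  have hsum : HasFDerivAt (fun w => ∑ b, θ (X w) b * fderiv ℝ (fun q => X q b) w e')
      (∑ b, (θ (X u) b • ((fderiv ℝ (fun w => fderiv ℝ (fun q => X q b) w) u).flip e')
        + (fderiv ℝ (fun q => X q b) u e')
            • ((fderiv ℝ (fun y => θ y b) (X u)).comp (fderiv ℝ X u)))) u :=
    HasFDerivAt.fun_sum fun b _ => (h1 b).mul (h2 b)
  rw [hsum.fderiv]
  simp [ContinuousLinearMap.sum_apply, ContinuousLinearMap.add_apply,
    ContinuousLinearMap.smul_apply, ContinuousLinearMap.flip_apply,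
    ContinuousLinearMap.comp_apply, smul_eq_mul]

lemma stmt8_curl {n : ℕ} (θ : (Fin n → ℝ) → Fin n → ℝ) (hθ : ContDiff ℝ (⊤ : ℕ∞) θ)
    (X : ℝ × ℝ → Fin n → ℝ) (hX : ContDiff ℝ (⊤ : ℕ∞) X) (u : ℝ × ℝ) :
    (∑ a, ∑ b, (pdn a (fun y => θ y b) (X u) - pdn b (fun y => θ y a) (X u))
        * pd 0 (fun q => X q a) u * pd 1 (fun q => X q b) u)
    = fderiv ℝ (fun w => ∑ b, θ (X w) b * fderiv ℝ (fun q => X q b) w ((0:ℝ),(1:ℝ))) u ((1:ℝ),(0:ℝ))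
      - fderiv ℝ (fun w => ∑ b, θ (X w) b * fderiv ℝ (fun q => X q b) w ((1:ℝ),(0:ℝ))) u ((0:ℝ),(1:ℝ)) := by
  simp only [stmt8_pd_zero, stmt8_pd_one]
  rw [stmt8_key_deriv θ hθ X hX u ((1:ℝ),(0:ℝ)) ((0:ℝ),(1:ℝ)),
      stmt8_key_deriv θ hθ X hX u ((0:ℝ),(1:ℝ)) ((1:ℝ),(0:ℝ))]
  have hsym : ∀ b : Fin n,
      fderiv ℝ (fun w => fderiv ℝ (fun q => X q b) w) u ((1:ℝ),(0:ℝ)) ((0:ℝ),(1:ℝ))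
      = fderiv ℝ (fun w => fderiv ℝ (fun q => X q b) w) u ((0:ℝ),(1:ℝ)) ((1:ℝ),(0:ℝ)) := by
    intro b
    exact second_derivative_symmetric
      (fun y => (stmt8_diff_top (stmt8_contDiff_comp_proj X hX b) y).hasFDerivAt)
      ((stmt8_diff_top ((stmt8_contDiff_comp_proj X hX b).fderiv_right
        (by exact_mod_cast le_top)) u).hasFDerivAt)
      _ _
  rw [← Finset.sum_sub_distrib]
  simp only [fun b => hsym b]
  have hexp : ∀ (b : Fin n) (e : ℝ × ℝ),
      fderiv ℝ (fun y => θ y b) (X u) (fderiv ℝ X u e)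
      = ∑ a, fderiv ℝ (fun q => X q a) u e * pdn a (fun y => θ y b) (X u) := by
    intro b e
    rw [stmt8_clm_expand (fderiv ℝ (fun y => θ y b) (X u)) (fderiv ℝ X u e)]
    refine Finset.sum_congr rfl fun a _ => ?_
    rw [stmt8_fderiv_comp_proj X hX a u e]
    rfl
  simp only [hexp]
  simp only [Finset.mul_sum, Finset.sum_sub_distrib, sub_mul, mul_sub]
  simp only [Finset.sum_add_distrib]
  have e1 : (∑ x : Fin n, ∑ x_1 : Fin n, pdn x (fun y => θ y x_1) (X u)
        * (fderiv ℝ (fun q => X q x) u) (1, 0) * (fderiv ℝ (fun q => X q x_1) u) (0, 1))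
      = ∑ x : Fin n, ∑ i : Fin n, (fderiv ℝ (fun q => X q x) u) (0, 1)
        * ((fderiv ℝ (fun q => X q i) u) (1, 0) * pdn i (fun y => θ y x) (X u)) := by
    rw [Finset.sum_comm]
    exact Finset.sum_congr rfl fun b _ => Finset.sum_congr rfl fun a _ => by ring
  have e2 : (∑ x : Fin n, ∑ x_1 : Fin n, pdn x_1 (fun y => θ y x) (X u)
        * (fderiv ℝ (fun q => X q x) u) (1, 0) * (fderiv ℝ (fun q => X q x_1) u) (0, 1))
      = ∑ x : Fin n, ∑ i : Fin n, (fderiv ℝ (fun q => X q x) u) (1, 0)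
        * ((fderiv ℝ (fun q => X q i) u) (0, 1) * pdn i (fun y => θ y x) (X u)) :=
    Finset.sum_congr rfl fun b _ => Finset.sum_congr rfl fun a _ => by ring
  rw [e1, e2]
  ring

lemma stmt8_hasDerivAt_fst (F : ℝ × ℝ → ℝ) (hF : ContDiff ℝ (⊤ : ℕ∞) F) (x y : ℝ) :
    HasDerivAt (fun t => F (t, y)) (fderiv ℝ F (x, y) ((1:ℝ), (0:ℝ))) x := by
  have hline : HasDerivAt (fun t : ℝ => (t, y)) (((1:ℝ), (0:ℝ))) x :=
    (hasDerivAt_id x).prodMk (hasDerivAt_const x y)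
  exact (stmt8_diff_top hF (x, y)).hasFDerivAt.comp_hasDerivAt x hline

lemma stmt8_hasDerivAt_snd (F : ℝ × ℝ → ℝ) (hF : ContDiff ℝ (⊤ : ℕ∞) F) (x y : ℝ) :
    HasDerivAt (fun t => F (x, t)) (fderiv ℝ F (x, y) ((0:ℝ), (1:ℝ))) y := by
  have hline : HasDerivAt (fun t : ℝ => (x, t)) (((0:ℝ), (1:ℝ))) y :=
    (hasDerivAt_const y x).prodMk (hasDerivAt_id y)
  exact (stmt8_diff_top hF (x, y)).hasFDerivAt.comp_hasDerivAt y hline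

lemma stmt8_cont_pdF (F : ℝ × ℝ → ℝ) (hF : ContDiff ℝ (⊤ : ℕ∞) F) (e : ℝ × ℝ) :
    Continuous (fun u => fderiv ℝ F u e) := by
  have h : ContDiff ℝ (⊤ : ℕ∞) (fun u => fderiv ℝ F u) :=
    hF.fderiv_right (by exact_mod_cast le_top)
  exact h.continuous.clm_apply continuous_const

lemma stmt8_line_fst (F : ℝ × ℝ → ℝ) (hF : ContDiff ℝ (⊤ : ℕ∞) F) (y : ℝ) :
    ∫ x in Set.Icc (0:ℝ) 1, fderiv ℝ F (x, y) ((1:ℝ), (0:ℝ)) = F (1, y) - F (0, y) := by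
  rw [MeasureTheory.integral_Icc_eq_integral_Ioc,
    ← intervalIntegral.integral_of_le (zero_le_one)]
  exact intervalIntegral.integral_eq_sub_of_hasDerivAt
    (fun x _ => stmt8_hasDerivAt_fst F hF x y)
    (((stmt8_cont_pdF F hF _).comp
      (by continuity : Continuous fun t : ℝ => (t, y))).intervalIntegrable 0 1)

lemma stmt8_line_snd (F : ℝ × ℝ → ℝ) (hF : ContDiff ℝ (⊤ : ℕ∞) F) (x : ℝ) :
    ∫ y in Set.Icc (0:ℝ) 1, fderiv ℝ F (x, y) ((0:ℝ), (1:ℝ)) = F (x, 1) - F (x, 0) := by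
  rw [MeasureTheory.integral_Icc_eq_integral_Ioc,
    ← intervalIntegral.integral_of_le (zero_le_one)]
  exact intervalIntegral.integral_eq_sub_of_hasDerivAt
    (fun y _ => stmt8_hasDerivAt_snd F hF x y)
    (((stmt8_cont_pdF F hF _).comp
      (by continuity : Continuous fun t : ℝ => (x, t))).intervalIntegrable 0 1)

lemma stmt8_fubini_snd (h : ℝ × ℝ → ℝ) (hc : Continuous h) :
    ∫ u in Set.Icc (0:ℝ) 1 ×ˢ Set.Icc (0:ℝ) 1, h u
      = ∫ x in Set.Icc (0:ℝ) 1, ∫ y in Set.Icc (0:ℝ) 1, h (x, y) := by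
  have hi : IntegrableOn h (Set.Icc (0:ℝ) 1 ×ˢ Set.Icc (0:ℝ) 1) volume :=
    hc.continuousOn.integrableOn_compact (isCompact_Icc.prod isCompact_Icc)
  rw [show (volume : Measure (ℝ × ℝ)) = (volume : Measure ℝ).prod volume from
    MeasureTheory.Measure.volume_eq_prod ℝ ℝ] at hi ⊢
  exact MeasureTheory.setIntegral_prod h hi

lemma stmt8_fubini_fst (h : ℝ × ℝ → ℝ) (hc : Continuous h) :
    ∫ u in Set.Icc (0:ℝ) 1 ×ˢ Set.Icc (0:ℝ) 1, h u
      = ∫ y in Set.Icc (0:ℝ) 1, ∫ x in Set.Icc (0:ℝ) 1, h (x, y) := by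
  have hi : IntegrableOn h (Set.Icc (0:ℝ) 1 ×ˢ Set.Icc (0:ℝ) 1) volume :=
    hc.continuousOn.integrableOn_compact (isCompact_Icc.prod isCompact_Icc)
  rw [show (volume : Measure (ℝ × ℝ)) = (volume : Measure ℝ).prod volume from
    MeasureTheory.Measure.volume_eq_prod ℝ ℝ] at hi ⊢
  have hi' : Integrable h (((volume : Measure ℝ).restrict (Set.Icc (0:ℝ) 1)).prod
      ((volume : Measure ℝ).restrict (Set.Icc (0:ℝ) 1))) := by
    rw [Measure.prod_restrict]; exact hi
  rw [← Measure.prod_restrict]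
  exact MeasureTheory.integral_prod_symm h hi'

lemma stmt8_stokes (F G : ℝ × ℝ → ℝ) (hF : ContDiff ℝ (⊤ : ℕ∞) F) (hG : ContDiff ℝ (⊤ : ℕ∞) G) :
    ∫ u in Set.Icc (0:ℝ) 1 ×ˢ Set.Icc (0:ℝ) 1,
        (fderiv ℝ F u ((1:ℝ), (0:ℝ)) - fderiv ℝ G u ((0:ℝ), (1:ℝ)))
      = ((∫ y in Set.Icc (0:ℝ) 1, F (1, y)) - ∫ y in Set.Icc (0:ℝ) 1, F (0, y))
        - ((∫ x in Set.Icc (0:ℝ) 1, G (x, 1)) - ∫ x in Set.Icc (0:ℝ) 1, G (x, 0)) := by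
  have hiF : IntegrableOn (fun u => fderiv ℝ F u ((1:ℝ),(0:ℝ)))
      (Set.Icc (0:ℝ) 1 ×ˢ Set.Icc (0:ℝ) 1) volume :=
    (stmt8_cont_pdF F hF _).continuousOn.integrableOn_compact (isCompact_Icc.prod isCompact_Icc)
  have hiG : IntegrableOn (fun u => fderiv ℝ G u ((0:ℝ),(1:ℝ)))
      (Set.Icc (0:ℝ) 1 ×ˢ Set.Icc (0:ℝ) 1) volume :=
    (stmt8_cont_pdF G hG _).continuousOn.integrableOn_compact (isCompact_Icc.prod isCompact_Icc)
  rw [MeasureTheory.integral_sub hiF hiG,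
    stmt8_fubini_fst _ (stmt8_cont_pdF F hF _), stmt8_fubini_snd _ (stmt8_cont_pdF G hG _)]
  have h1 : ∫ y in Set.Icc (0:ℝ) 1, ∫ x in Set.Icc (0:ℝ) 1, fderiv ℝ F (x,y) ((1:ℝ),(0:ℝ))
      = ∫ y in Set.Icc (0:ℝ) 1, (F (1,y) - F (0,y)) :=
    setIntegral_congr_fun measurableSet_Icc fun y _ => stmt8_line_fst F hF y
  have h2 : ∫ x in Set.Icc (0:ℝ) 1, ∫ y in Set.Icc (0:ℝ) 1, fderiv ℝ G (x,y) ((0:ℝ),(1:ℝ))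
      = ∫ x in Set.Icc (0:ℝ) 1, (G (x,1) - G (x,0)) :=
    setIntegral_congr_fun measurableSet_Icc fun x _ => stmt8_line_snd G hG x
  have c1 : Continuous fun y : ℝ => F (1, y) := hF.continuous.comp (by continuity)
  have c2 : Continuous fun y : ℝ => F (0, y) := hF.continuous.comp (by continuity)
  have c3 : Continuous fun x : ℝ => G (x, 1) := hG.continuous.comp (by continuity)
  have c4 : Continuous fun x : ℝ => G (x, 0) := hG.continuous.comp (by continuity)
  rw [h1, h2,
    MeasureTheory.integral_sub (c1.continuousOn.integrableOn_compact isCompact_Icc)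
      (c2.continuousOn.integrableOn_compact isCompact_Icc),
    MeasureTheory.integral_sub (c3.continuousOn.integrableOn_compact isCompact_Icc)
      (c4.continuousOn.integrableOn_compact isCompact_Icc)]

lemma stmt8_ae_interior : ∀ᵐ y : ℝ, y ∈ Set.Icc (0:ℝ) 1 → y ∈ Set.Ioo (0:ℝ) 1 := by
  have h0 : ∀ᵐ y : ℝ, y ∉ ({0} : Set ℝ) :=
    measure_eq_zero_iff_ae_notMem.mp (measure_singleton 0)
  have h1 : ∀ᵐ y : ℝ, y ∉ ({1} : Set ℝ) :=
    measure_eq_zero_iff_ae_notMem.mp (measure_singleton 1)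
  filter_upwards [h0, h1] with y hy0 hy1 hy
  simp only [Set.mem_singleton_iff] at hy0 hy1
  exact ⟨lt_of_le_of_ne hy.1 (Ne.symm hy0), lt_of_le_of_ne hy.2 hy1⟩

lemma stmt8_edge_v {n : ℕ} (θ : (Fin n → ℝ) → Fin n → ℝ) (X₀ X₁ : ℝ × ℝ → Fin n → ℝ)
    (hX₀ : ContDiff ℝ (⊤ : ℕ∞) X₀) (hX₁ : ContDiff ℝ (⊤ : ℕ∞) X₁) (x0 : ℝ)
    (hb : ∀ y ∈ Set.Icc (0:ℝ) 1, X₀ (x0, y) = X₁ (x0, y)) :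
    ∫ y in Set.Icc (0:ℝ) 1,
        (∑ b, θ (X₀ (x0, y)) b * fderiv ℝ (fun q => X₀ q b) (x0, y) ((0:ℝ), (1:ℝ)))
    = ∫ y in Set.Icc (0:ℝ) 1,
        (∑ b, θ (X₁ (x0, y)) b * fderiv ℝ (fun q => X₁ q b) (x0, y) ((0:ℝ), (1:ℝ))) := by
  apply setIntegral_congr_ae measurableSet_Icc
  filter_upwards [stmt8_ae_interior] with y hy hyIcc
  have hyo := hy hyIcc
  have hval : X₀ (x0, y) = X₁ (x0, y) := hb y hyIcc
  have hder : ∀ b : Fin n,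
      fderiv ℝ (fun q => X₀ q b) (x0, y) ((0:ℝ), (1:ℝ))
        = fderiv ℝ (fun q => X₁ q b) (x0, y) ((0:ℝ), (1:ℝ)) := by
    intro b
    have h0 := (stmt8_hasDerivAt_snd (fun q => X₀ q b)
      (stmt8_contDiff_comp_proj X₀ hX₀ b) x0 y).deriv
    have h1 := (stmt8_hasDerivAt_snd (fun q => X₁ q b)
      (stmt8_contDiff_comp_proj X₁ hX₁ b) x0 y).deriv
    rw [← h0, ← h1]
    apply Filter.EventuallyEq.deriv_eq
    filter_upwards [isOpen_Ioo.mem_nhds hyo] with t ht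
    rw [hb t ⟨le_of_lt ht.1, le_of_lt ht.2⟩]
  exact Finset.sum_congr rfl fun b _ => by rw [hval, hder b]

lemma stmt8_edge_h {n : ℕ} (θ : (Fin n → ℝ) → Fin n → ℝ) (X₀ X₁ : ℝ × ℝ → Fin n → ℝ)
    (hX₀ : ContDiff ℝ (⊤ : ℕ∞) X₀) (hX₁ : ContDiff ℝ (⊤ : ℕ∞) X₁) (y0 : ℝ)
    (hb : ∀ x ∈ Set.Icc (0:ℝ) 1, X₀ (x, y0) = X₁ (x, y0)) :
    ∫ x in Set.Icc (0:ℝ) 1,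
        (∑ b, θ (X₀ (x, y0)) b * fderiv ℝ (fun q => X₀ q b) (x, y0) ((1:ℝ), (0:ℝ)))
    = ∫ x in Set.Icc (0:ℝ) 1,
        (∑ b, θ (X₁ (x, y0)) b * fderiv ℝ (fun q => X₁ q b) (x, y0) ((1:ℝ), (0:ℝ))) := by
  apply setIntegral_congr_ae measurableSet_Icc
  filter_upwards [stmt8_ae_interior] with x hx hxIcc
  have hxo := hx hxIcc
  have hval : X₀ (x, y0) = X₁ (x, y0) := hb x hxIcc
  have hder : ∀ b : Fin n,
      fderiv ℝ (fun q => X₀ q b) (x, y0) ((1:ℝ), (0:ℝ))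
        = fderiv ℝ (fun q => X₁ q b) (x, y0) ((1:ℝ), (0:ℝ)) := by
    intro b
    have h0 := (stmt8_hasDerivAt_fst (fun q => X₀ q b)
      (stmt8_contDiff_comp_proj X₀ hX₀ b) x y0).deriv
    have h1 := (stmt8_hasDerivAt_fst (fun q => X₁ q b)
      (stmt8_contDiff_comp_proj X₁ hX₁ b) x y0).deriv
    rw [← h0, ← h1]
    apply Filter.EventuallyEq.deriv_eq
    filter_upwards [isOpen_Ioo.mem_nhds hxo] with t ht
    rw [hb t ⟨le_of_lt ht.1, le_of_lt ht.2⟩]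
  exact Finset.sum_congr rfl fun b _ => by rw [hval, hder b]

lemma stmt8_smoothFG {n : ℕ} (θ : (Fin n → ℝ) → Fin n → ℝ) (hθ : ContDiff ℝ (⊤ : ℕ∞) θ)
    (X : ℝ × ℝ → Fin n → ℝ) (hX : ContDiff ℝ (⊤ : ℕ∞) X) (e' : ℝ × ℝ) :
    ContDiff ℝ (⊤ : ℕ∞) (fun w => ∑ b, θ (X w) b * fderiv ℝ (fun q => X q b) w e') := by
  apply ContDiff.sum
  intro b _
  have h1 : ContDiff ℝ (⊤ : ℕ∞) (fun w => θ (X w) b) :=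
    (stmt8_contDiff_comp_proj θ hθ b).comp hX
  have h2 : ContDiff ℝ (⊤ : ℕ∞) (fun w => fderiv ℝ (fun q => X q b) w) :=
    (stmt8_contDiff_comp_proj X hX b).fderiv_right (by exact_mod_cast le_top)
  exact h1.mul (h2.clm_apply contDiff_const)

/-- For the exact 2-form `ω_{ab} = ∂_a θ_b − ∂_b θ_a` on ℝⁿ and two smooth
maps `X₀, X₁ : ℝ² → ℝⁿ` that agree on the boundary of the unit square `Q = [0,1]²`,
the integrals over `Q` of the pullback coefficients `∑ ω_{ab}(X) ∂₁X^a ∂₂X^b` agree. -/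
theorem stmt8 {n : ℕ} (hn : 1 ≤ n)
    (θ : (Fin n → ℝ) → Fin n → ℝ) (hθ : ContDiff ℝ (⊤ : ℕ∞) θ)
    (X₀ X₁ : ℝ × ℝ → Fin n → ℝ)
    (hX₀ : ContDiff ℝ (⊤ : ℕ∞) X₀) (hX₁ : ContDiff ℝ (⊤ : ℕ∞) X₁)
    (hbd : ∀ u ∈ Set.Icc (0:ℝ) 1 ×ˢ Set.Icc (0:ℝ) 1,
      (u.1 = 0 ∨ u.1 = 1 ∨ u.2 = 0 ∨ u.2 = 1) → X₀ u = X₁ u) :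
    ∫ u in Set.Icc (0:ℝ) 1 ×ˢ Set.Icc (0:ℝ) 1,
      (∑ a, ∑ b, (pdn a (fun y => θ y b) (X₀ u) - pdn b (fun y => θ y a) (X₀ u))
        * pd 0 (fun q => X₀ q a) u * pd 1 (fun q => X₀ q b) u)
    = ∫ u in Set.Icc (0:ℝ) 1 ×ˢ Set.Icc (0:ℝ) 1,
      (∑ a, ∑ b, (pdn a (fun y => θ y b) (X₁ u) - pdn b (fun y => θ y a) (X₁ u))
        * pd 0 (fun q => X₁ q a) u * pd 1 (fun q => X₁ q b) u) := by
  have key : ∀ (X : ℝ × ℝ → Fin n → ℝ), ContDiff ℝ (⊤ : ℕ∞) X →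
      (∫ u in Set.Icc (0:ℝ) 1 ×ˢ Set.Icc (0:ℝ) 1,
        (∑ a, ∑ b, (pdn a (fun y => θ y b) (X u) - pdn b (fun y => θ y a) (X u))
          * pd 0 (fun q => X q a) u * pd 1 (fun q => X q b) u))
      = ((∫ y in Set.Icc (0:ℝ) 1,
            (∑ b, θ (X (1, y)) b * fderiv ℝ (fun q => X q b) (1, y) ((0:ℝ),(1:ℝ))))
          - ∫ y in Set.Icc (0:ℝ) 1,
            (∑ b, θ (X (0, y)) b * fderiv ℝ (fun q => X q b) (0, y) ((0:ℝ),(1:ℝ))))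
        - ((∫ x in Set.Icc (0:ℝ) 1,
            (∑ b, θ (X (x, 1)) b * fderiv ℝ (fun q => X q b) (x, 1) ((1:ℝ),(0:ℝ))))
          - ∫ x in Set.Icc (0:ℝ) 1,
            (∑ b, θ (X (x, 0)) b * fderiv ℝ (fun q => X q b) (x, 0) ((1:ℝ),(0:ℝ)))) := by
    intro X hX
    rw [setIntegral_congr_fun (measurableSet_Icc.prod measurableSet_Icc)
      (fun u _ => stmt8_curl θ hθ X hX u)]
    exact stmt8_stokes _ _ (stmt8_smoothFG θ hθ X hX _) (stmt8_smoothFG θ hθ X hX _)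
  rw [key X₀ hX₀, key X₁ hX₁,
    stmt8_edge_v θ X₀ X₁ hX₀ hX₁ 1 (fun y hy => hbd (1, y)
      ⟨Set.mem_Icc.mpr ⟨zero_le_one, le_refl 1⟩, hy⟩ (Or.inr (Or.inl rfl))),
    stmt8_edge_v θ X₀ X₁ hX₀ hX₁ 0 (fun y hy => hbd (0, y)
      ⟨Set.mem_Icc.mpr ⟨le_refl 0, zero_le_one⟩, hy⟩ (Or.inl rfl)),
    stmt8_edge_h θ X₀ X₁ hX₀ hX₁ 1 (fun x hx => hbd (x, 1)
      ⟨hx, Set.mem_Icc.mpr ⟨zero_le_one, le_refl 1⟩⟩ (Or.inr (Or.inr (Or.inr rfl)))),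
    stmt8_edge_h θ X₀ X₁ hX₀ hX₁ 0 (fun x hx => hbd (x, 0)
      ⟨hx, Set.mem_Icc.mpr ⟨le_refl 0, zero_le_one⟩⟩ (Or.inr (Or.inr (Or.inl rfl))))]
end

section
/- Let θ : ℝⁿ → ℝⁿ be a smooth map (components θ_μ of a 1-form) and X : ℝ² → ℝⁿ a smooth map. Then Stokes' theorem for the pullback holds on the unit square Q = [0,1]²: ∫_Q Σ_{a,b} (∂_a θ_b − ∂_b θ_a)(X(u)) ∂₁X^a(u) ∂₂X^b(u) du = ∫_0^1 Σ_μ θ_μ(X(t,0)) ∂₁X^μ(t,0) dt + ∫_0^1 Σ_μ θ_μ(X(1,t)) ∂₂X^μ(1,t) dt − ∫_0^1 Σ_μ θ_μ(X(t,1)) ∂₁X^μ(t,1) dt − ∫_0^1 Σ_μ θ_μ(X(0,t)) ∂₂X^μ(0,t) dt; i.e., the surface integral of X*(dθ) over Q equals the line integral of X*(θ) around ∂Q traversed counterclockwise. -/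
open MeasureTheory

/-- Component of the Fréchet derivative of a map into `Fin n → ℝ`. -/
lemma fderiv_component {E : Type*} [NormedAddCommGroup E] [NormedSpace ℝ E] {n : ℕ}
    {f : E → Fin n → ℝ} {x : E} (hf : DifferentiableAt ℝ f x) (μ : Fin n) (v : E) :
    fderiv ℝ (fun y => f y μ) x v = fderiv ℝ f x v μ := by
  have h : HasFDerivAt (fun y => f y μ)
      ((ContinuousLinearMap.proj μ).comp (fderiv ℝ f x)) x :=
    (ContinuousLinearMap.proj (R := ℝ) (φ := fun _ : Fin n => ℝ) μ).hasFDerivAt.comp x hf.hasFDerivAt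
  rw [h.fderiv]; rfl

/-- Apply a continuous linear map on `Fin n → ℝ` via the standard basis. -/
lemma clm_pi_apply {n : ℕ} (L : (Fin n → ℝ) →L[ℝ] (Fin n → ℝ)) (w : Fin n → ℝ) (b : Fin n) :
    L w b = ∑ a, w a * L (Pi.single a 1) b := by
  have h := L.toLinearMap.pi_apply_eq_sum_univ w
  have h2 : ∀ a : Fin n, (fun j => if a = j then (1:ℝ) else 0) = Pi.single a 1 := by
    intro a; funext j; rw [Pi.single_apply]; simp [eq_comm]
  simp only [ContinuousLinearMap.coe_coe] at h
  calc L w b = (∑ a, w a • L fun j => if a = j then (1:ℝ) else 0) b := by rw [← h]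
    _ = ∑ a, w a * L (Pi.single a 1) b := by
        rw [Finset.sum_apply]
        exact Finset.sum_congr rfl fun a _ => by rw [h2 a]; rfl

/-- Stokes' theorem for the pullback by `X : ℝ² → ℝⁿ` of the exact 2-form
`dθ` on the unit square: the surface integral of `X*(dθ)` over `Q = [0,1]²` equals the
line integral of `X*(θ)` around `∂Q` traversed counterclockwise. -/
theorem stmt9 {n : ℕ} (hn : 1 ≤ n)
    (θ : (Fin n → ℝ) → Fin n → ℝ) (hθ : ContDiff ℝ (⊤ : ℕ∞) θ)
    (X : ℝ × ℝ → Fin n → ℝ) (hX : ContDiff ℝ (⊤ : ℕ∞) X) :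
    ∫ u in Set.Icc (0:ℝ) 1 ×ˢ Set.Icc (0:ℝ) 1,
      (∑ a, ∑ b, (pdn a (fun y => θ y b) (X u) - pdn b (fun y => θ y a) (X u))
        * pd 0 (fun q => X q a) u * pd 1 (fun q => X q b) u)
    = (∫ t in (0:ℝ)..1, ∑ μ, θ (X (t, 0)) μ * pd 0 (fun q => X q μ) (t, 0))
      + (∫ t in (0:ℝ)..1, ∑ μ, θ (X (1, t)) μ * pd 1 (fun q => X q μ) (1, t))
      - (∫ t in (0:ℝ)..1, ∑ μ, θ (X (t, 1)) μ * pd 0 (fun q => X q μ) (t, 1))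
      - (∫ t in (0:ℝ)..1, ∑ μ, θ (X (0, t)) μ * pd 1 (fun q => X q μ) (0, t)) := by
  have hXd : Differentiable ℝ X := hX.differentiable (by norm_num)
  have hθd : Differentiable ℝ θ := hθ.differentiable (by norm_num)
  set D : ℝ × ℝ → (ℝ × ℝ) →L[ℝ] (Fin n → ℝ) := fderiv ℝ X with hD
  set E : (Fin n → ℝ) → (Fin n → ℝ) →L[ℝ] (Fin n → ℝ) := fderiv ℝ θ with hE
  have hDc : ContDiff ℝ (⊤ : ℕ∞) D := hX.fderiv_right (by norm_num)
  have hDd : Differentiable ℝ D := hDc.differentiable (by norm_num)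
  have hEc : ContDiff ℝ (⊤ : ℕ∞) E := hθ.fderiv_right (by norm_num)
  -- rewrite pd / pdn
  have hpd0 : ∀ (μ : Fin n) (u : ℝ × ℝ),
      pd 0 (fun q => X q μ) u = D u (1, 0) μ := by
    intro μ u; unfold pd; rw [if_pos rfl]; exact fderiv_component (hXd u) μ _
  have hpd1 : ∀ (μ : Fin n) (u : ℝ × ℝ),
      pd 1 (fun q => X q μ) u = D u (0, 1) μ := by
    intro μ u; unfold pd; rw [if_neg (by decide)]; exact fderiv_component (hXd u) μ _
  have hpdn : ∀ (a b : Fin n) (x : Fin n → ℝ),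
      pdn a (fun y => θ y b) x = E x (Pi.single a 1) b := by
    intro a b x; unfold pdn; exact fderiv_component (hθd x) b _
  simp only [hpd0, hpd1, hpdn]
  -- the two components of the pullback 1-form
  set P : ℝ × ℝ → ℝ := fun u => ∑ μ, θ (X u) μ * D u (1, 0) μ with hP
  set Q : ℝ × ℝ → ℝ := fun u => ∑ μ, θ (X u) μ * D u (0, 1) μ with hQ
  -- candidate derivatives
  set PD : ℝ × ℝ → (ℝ × ℝ) →L[ℝ] ℝ := fun u => ∑ μ,
      (θ (X u) μ • ((ContinuousLinearMap.proj μ).comp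
          ((ContinuousLinearMap.apply ℝ (Fin n → ℝ) ((1:ℝ), (0:ℝ))).comp (fderiv ℝ D u)))
        + D u (1, 0) μ • ((ContinuousLinearMap.proj μ).comp ((E (X u)).comp (D u)))) with hPD
  set QD : ℝ × ℝ → (ℝ × ℝ) →L[ℝ] ℝ := fun u => ∑ μ,
      (θ (X u) μ • ((ContinuousLinearMap.proj μ).comp
          ((ContinuousLinearMap.apply ℝ (Fin n → ℝ) ((0:ℝ), (1:ℝ))).comp (fderiv ℝ D u)))
        + D u (0, 1) μ • ((ContinuousLinearMap.proj μ).comp ((E (X u)).comp (D u)))) with hQD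
  have hterm : ∀ (e : ℝ × ℝ) (μ : Fin n) (u : ℝ × ℝ),
      HasFDerivAt (fun u => θ (X u) μ * D u e μ)
        (θ (X u) μ • ((ContinuousLinearMap.proj μ).comp
            ((ContinuousLinearMap.apply ℝ (Fin n → ℝ) e).comp (fderiv ℝ D u)))
          + D u e μ • ((ContinuousLinearMap.proj μ).comp ((E (X u)).comp (D u)))) u := by
    intro e μ u
    have h1 : HasFDerivAt (fun u => θ (X u)) ((E (X u)).comp (D u)) u :=
      (hθd (X u)).hasFDerivAt.comp u (hXd u).hasFDerivAt
    have h1μ : HasFDerivAt (fun u => θ (X u) μ)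
        ((ContinuousLinearMap.proj μ).comp ((E (X u)).comp (D u))) u :=
      (ContinuousLinearMap.proj (R := ℝ) (φ := fun _ : Fin n => ℝ) μ).hasFDerivAt.comp u h1
    have h2 : HasFDerivAt (fun u => D u e)
        ((ContinuousLinearMap.apply ℝ (Fin n → ℝ) e).comp (fderiv ℝ D u)) u :=
      (ContinuousLinearMap.apply ℝ (Fin n → ℝ) e).hasFDerivAt.comp u (hDd u).hasFDerivAt
    have h2μ : HasFDerivAt (fun u => D u e μ)
        ((ContinuousLinearMap.proj μ).comp
          ((ContinuousLinearMap.apply ℝ (Fin n → ℝ) e).comp (fderiv ℝ D u))) u :=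
      (ContinuousLinearMap.proj (R := ℝ) (φ := fun _ : Fin n => ℝ) μ).hasFDerivAt.comp u h2
    exact h1μ.mul h2μ
  have hPd : ∀ u, HasFDerivAt P (PD u) u := fun u =>
    HasFDerivAt.fun_sum fun μ _ => hterm (1, 0) μ u
  have hQd : ∀ u, HasFDerivAt Q (QD u) u := fun u =>
    HasFDerivAt.fun_sum fun μ _ => hterm (0, 1) μ u
  -- symmetry of second derivatives
  have hsymm : ∀ u : ℝ × ℝ, fderiv ℝ D u (1, 0) (0, 1) = fderiv ℝ D u (0, 1) (1, 0) := by
    intro u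
    exact second_derivative_symmetric (fun y => (hXd y).hasFDerivAt) (hDd u).hasFDerivAt _ _
  -- the key pointwise identity
  have key : ∀ u : ℝ × ℝ,
      QD u (1, 0) + (-(PD u)) (0, 1)
        = ∑ a, ∑ b, (E (X u) (Pi.single a 1) b - E (X u) (Pi.single b 1) a)
            * D u (1, 0) a * D u (0, 1) b := by
    intro u
    simp only [ContinuousLinearMap.neg_apply, hPD, hQD, ContinuousLinearMap.sum_apply,
      ContinuousLinearMap.add_apply, ContinuousLinearMap.coe_smul', Pi.smul_apply,
      ContinuousLinearMap.coe_comp', Function.comp_apply, ContinuousLinearMap.proj_apply,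
      ContinuousLinearMap.apply_apply, smul_eq_mul]
    rw [← sub_eq_add_neg, ← Finset.sum_sub_distrib]
    have : ∀ μ ∈ Finset.univ, (θ (X u) μ * fderiv ℝ D u (1,0) (0,1) μ
          + D u (0,1) μ * E (X u) (D u (1,0)) μ)
        - (θ (X u) μ * fderiv ℝ D u (0,1) (1,0) μ
          + D u (1,0) μ * E (X u) (D u (0,1)) μ)
        = D u (0,1) μ * E (X u) (D u (1,0)) μ - D u (1,0) μ * E (X u) (D u (0,1)) μ := by
      intro μ _; rw [hsymm u]; ring
    rw [Finset.sum_congr rfl this]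
    simp only [clm_pi_apply (E (X u)) (D u (1,0)), clm_pi_apply (E (X u)) (D u (0,1)),
      Finset.mul_sum, sub_mul, Finset.sum_sub_distrib]
    congr 1
    · rw [Finset.sum_comm]
      exact Finset.sum_congr rfl fun a _ => Finset.sum_congr rfl fun b _ => by ring
    · exact Finset.sum_congr rfl fun a _ => Finset.sum_congr rfl fun b _ => by ring
  -- continuity of the integrand
  have hcont : Continuous fun u : ℝ × ℝ =>
      ∑ a, ∑ b, (E (X u) (Pi.single a 1) b - E (X u) (Pi.single b 1) a)
        * D u (1, 0) a * D u (0, 1) b := by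
    have hEX : Continuous fun u : ℝ × ℝ => E (X u) := hEc.continuous.comp hX.continuous
    have hDco : Continuous D := hDc.continuous
    apply continuous_finset_sum; intro a _
    apply continuous_finset_sum; intro b _
    apply Continuous.mul
    apply Continuous.mul
    · exact Continuous.sub
        ((continuous_apply b).comp (hEX.clm_apply continuous_const))
        ((continuous_apply a).comp (hEX.clm_apply continuous_const))
    · exact (continuous_apply a).comp (hDco.clm_apply continuous_const)
    · exact (continuous_apply b).comp (hDco.clm_apply continuous_const)
  -- apply the divergence theorem on [0,1]²
  have hle : ((0:ℝ), (0:ℝ)) ≤ ((1:ℝ), (1:ℝ)) := ⟨zero_le_one, zero_le_one⟩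
  have hdiv := integral_divergence_prod_Icc_of_hasFDerivAt_off_countable_of_le
    Q (fun u => -P u) QD (fun u => -(PD u)) ((0:ℝ), (0:ℝ)) ((1:ℝ), (1:ℝ)) hle ∅
    Set.countable_empty
    (Continuous.continuousOn (by
      exact continuous_finset_sum _ fun μ _ =>
        ((continuous_apply μ).comp (hθ.continuous.comp hX.continuous)).mul
          ((continuous_apply μ).comp (hDc.continuous.clm_apply continuous_const))))
    (Continuous.continuousOn (by
      exact Continuous.neg (continuous_finset_sum _ fun μ _ =>
        ((continuous_apply μ).comp (hθ.continuous.comp hX.continuous)).mul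
          ((continuous_apply μ).comp (hDc.continuous.clm_apply continuous_const)))))
    (fun x _ => hQd x) (fun x _ => (hPd x).neg)
    (by
      rw [show (fun x : ℝ × ℝ => QD x (1, 0) + (-(PD x)) (0, 1))
          = fun u => ∑ a, ∑ b, (E (X u) (Pi.single a 1) b - E (X u) (Pi.single b 1) a)
              * D u (1, 0) a * D u (0, 1) b from funext key]
      exact hcont.continuousOn.integrableOn_compact isCompact_Icc)
  have hIcc : Set.Icc ((0:ℝ), (0:ℝ)) ((1:ℝ), (1:ℝ)) = Set.Icc (0:ℝ) 1 ×ˢ Set.Icc (0:ℝ) 1 :=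
    Set.Icc_prod_eq _ _
  rw [hIcc] at hdiv
  rw [show (fun x : ℝ × ℝ => QD x (1, 0) + (-(PD x)) (0, 1))
      = fun u => ∑ a, ∑ b, (E (X u) (Pi.single a 1) b - E (X u) (Pi.single b 1) a)
          * D u (1, 0) a * D u (0, 1) b from funext key] at hdiv
  rw [hdiv]
  simp only [intervalIntegral.integral_neg]
  ring
end
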